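/- The rotated second-order cone is self-dual: for every natural number n ≥ 1, the inner dual cone of Q_r^{n+2} in ℝ × ℝ × ℝⁿ (with respect to the standard Euclidean inner product ⟨(a,b,u),(c,e,v)⟩ = a·c + b·e + ⟨u,v⟩) is equal to Q_r^{n+2} itself; that is, (c,e,v) satisfies a·c + b·e + ⟨u,v⟩ ≥ 0 for all (a,b,u) ∈ Q_r^{n+2} if and only if c ≥ 0, e ≥ 0, and ‖v‖² ≤ 2·c·e. -/

import Mathlib

/-- The rotated second-order cone `Q_r^{n+2} ⊆ ℝ × ℝ × ℝⁿ`: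
`(a, b, u)` with `a ≥ 0`, `b ≥ 0`, `‖u‖² ≤ 2·a·b`. -/
def RSOC (n : ℕ) : Set (ℝ × ℝ × EuclideanSpace ℝ (Fin n)) :=
  {p | 0 ≤ p.1 ∧ 0 ≤ p.2.1 ∧ ‖p.2.2‖ ^ 2 ≤ 2 * p.1 * p.2.1}

/-!
If `(a, b, u)` and `(c, e, v)` lie in the cone, Cauchy–Schwarz
and AM–GM give `|⟪u, v⟫| ≤ ‖u‖‖v‖ ≤ √(2ab · 2ce) ≤ ac + be`. Conversely, testing against the
cone elements `(1, 0, 0)`, `(0, 1, 0)` and `(t², ‖v‖²/2, -t v)` for all `t ∈ ℝ` gives `c ≥ 0`,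
`e ≥ 0` and a nonnegative quadratic `c t² - ‖v‖² t + e‖v‖²/2`, whose discriminant
`‖v‖²(‖v‖² - 2ce)` is therefore nonpositive.
-/

open RealInnerProductSpace

section Seminormed

variable {E : Type*} [SeminormedAddCommGroup E]

variable (E) in
def rotatedSOC : Set (ℝ × ℝ × E) :=
  {p | 0 ≤ p.1 ∧ 0 ≤ p.2.1 ∧ ‖p.2.2‖ ^ 2 ≤ 2 * p.1 * p.2.1}

lemma mem_rotatedSOC {x : ℝ × ℝ × E} :
    x ∈ rotatedSOC E ↔ 0 ≤ x.1 ∧ 0 ≤ x.2.1 ∧ ‖x.2.2‖ ^ 2 ≤ 2 * x.1 * x.2.1 :=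
  Iff.rfl

lemma norm_mul_norm_le_of_mem_rotatedSOC {x y : ℝ × ℝ × E}
    (hx : x ∈ rotatedSOC E) (hy : y ∈ rotatedSOC E) :
    ‖x.2.2‖ * ‖y.2.2‖ ≤ x.1 * y.1 + x.2.1 * y.2.1 := by
  obtain ⟨a, b, u⟩ := x
  obtain ⟨c, e, v⟩ := y
  obtain ⟨ha, hb, hu⟩ := hx
  obtain ⟨hc, he, hv⟩ := hy
  have hsq : (‖u‖ * ‖v‖) ^ 2 ≤ (a * c + b * e) ^ 2 :=
    calc (‖u‖ * ‖v‖) ^ 2 = ‖u‖ ^ 2 * ‖v‖ ^ 2 := mul_pow _ _ _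
      _ ≤ (2 * a * b) * (2 * c * e) := mul_le_mul hu hv (sq_nonneg _) (by positivity)
      _ = 4 * (a * c) * (b * e) := by ring
      _ ≤ (a * c + b * e) ^ 2 := four_mul_le_sq_add _ _
  exact (abs_le_of_sq_le_sq' hsq (by positivity)).2

end Seminormed

section InnerProductSpace

variable {E : Type*} [NormedAddCommGroup E] [InnerProductSpace ℝ E]

lemma rotatedSOC_pairing_nonneg {x y : ℝ × ℝ × E}
    (hx : x ∈ rotatedSOC E) (hy : y ∈ rotatedSOC E) :
    0 ≤ x.1 * y.1 + x.2.1 * y.2.1 + ⟪x.2.2, y.2.2⟫ := by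
  have hinner : -(‖x.2.2‖ * ‖y.2.2‖) ≤ ⟪x.2.2, y.2.2⟫ :=
    neg_le_of_abs_le (abs_real_inner_le_norm _ _)
  linarith [norm_mul_norm_le_of_mem_rotatedSOC hx hy]

lemma mem_rotatedSOC_of_forall_pairing_nonneg {y : ℝ × ℝ × E}
    (h : ∀ x ∈ rotatedSOC E, 0 ≤ x.1 * y.1 + x.2.1 * y.2.1 + ⟪x.2.2, y.2.2⟫) :
    y ∈ rotatedSOC E := by
  obtain ⟨c, e, v⟩ := y
  have hc : 0 ≤ c := by simpa using h (1, 0, 0) (by simp [mem_rotatedSOC])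
  have he : 0 ≤ e := by simpa using h (0, 1, 0) (by simp [mem_rotatedSOC])
  have hquad : ∀ t : ℝ, 0 ≤ c * (t * t) + (-‖v‖ ^ 2) * t + e * ‖v‖ ^ 2 / 2 := by
    intro t
    have hmem : (t ^ 2, ‖v‖ ^ 2 / 2, -(t • v)) ∈ rotatedSOC E := by
      refine ⟨sq_nonneg t, by positivity, le_of_eq ?_⟩
      rw [norm_neg, norm_smul, mul_pow, Real.norm_eq_abs, sq_abs]
      ring
    have := h _ hmem
    simp only [inner_neg_left, inner_smul_left, real_inner_self_eq_norm_sq, conj_trivial] at this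
    linarith
  have hdiscrim : ‖v‖ ^ 2 * (‖v‖ ^ 2 - 2 * c * e) ≤ 0 := by
    have := discrim_le_zero hquad
    rw [discrim] at this
    linarith
  refine ⟨hc, he, ?_⟩
  by_contra! hlt
  have hpos : 0 < ‖v‖ ^ 2 := lt_of_le_of_lt (by positivity) hlt
  linarith [mul_pos hpos (sub_pos.mpr hlt)]

end InnerProductSpace

theorem rsoc_self_dual_general (n : ℕ) :
    {y : ℝ × ℝ × EuclideanSpace ℝ (Fin n) |
        ∀ x ∈ RSOC n,
          0 ≤ x.1 * y.1 + x.2.1 * y.2.1 + (inner ℝ x.2.2 y.2.2 : ℝ)} = RSOC n := by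
  ext y
  exact ⟨mem_rotatedSOC_of_forall_pairing_nonneg, fun hy x hx => rotatedSOC_pairing_nonneg hx hy⟩

/-- The rotated second-order cone is self-dual: the inner dual cone of `Q_r^{n+2}`
with respect to the pairing `⟨(a,b,u),(c,e,v)⟩ = a·c + b·e + ⟨u,v⟩` equals `Q_r^{n+2}`. -/
theorem rsoc_self_dual (n : ℕ) (hn : 1 ≤ n) :
    {y : ℝ × ℝ × EuclideanSpace ℝ (Fin n) |
        ∀ x ∈ RSOC n,
          0 ≤ x.1 * y.1 + x.2.1 * y.2.1 + (inner ℝ x.2.2 y.2.2 : ℝ)} = RSOC n :=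
  rsoc_self_dual_general n
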